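/- (Theorem 2.1, second identity, q-case; q-factorial moments of the q-binomial distribution of the first kind, giving the conditional moments of Y₂ given Y₁ = y₁ upon taking N = n − y₁ and α = α₂.) Let N ∈ ℕ, α ∈ (0,1) and let m be a natural number with m ≤ N. Then ∑_{y=0}^{N} [y]_{m,q} · C_q(N,y) · α^{y} · q^{b(y)} / ⟨1⊕α⟩_{N} = [N]_{m,q} · α^{m} · q^{b(m)} / ⟨1⊕α⟩_{m}. -/

import Mathlib

open Finset

/-- q-integer `[k]_q = (1 - q^k)/(1 - q)`. -/
noncomputable def qInt (q : ℝ) (k : ℤ) : ℝ := (1 - q ^ k) / (1 - q)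

/-- q-factorial `[n]_q! = ∏_{i=1}^n [i]_q`. -/
noncomputable def qFact (q : ℝ) (n : ℕ) : ℝ := ∏ i ∈ Finset.Icc 1 n, qInt q (i : ℤ)

/-- q-binomial coefficient `C_q(n,k)`. -/
noncomputable def qBinom (q : ℝ) (n k : ℕ) : ℝ := qFact q n / (qFact q k * qFact q (n - k))

/-- q-falling factorial `[u]_{m,q} = ∏_{i=1}^m [u-i+1]_q`. -/
noncomputable def qFall (q : ℝ) (u : ℤ) (m : ℕ) : ℝ := ∏ i ∈ Finset.Icc 1 m, qInt q (u - (i : ℤ) + 1)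

/-- `[k]_{q⁻¹} = q^{1-k} · [k]_q`. -/
noncomputable def qIntInv (q : ℝ) (k : ℤ) : ℝ := q ^ (1 - k) * qInt q k

/-- `[u]_{m,q⁻¹} = ∏_{i=1}^m [u-i+1]_{q⁻¹}`. -/
noncomputable def qFallInv (q : ℝ) (u : ℤ) (m : ℕ) : ℝ := ∏ i ∈ Finset.Icc 1 m, qIntInv q (u - (i : ℤ) + 1)

/-- `b(k) = k(k-1)/2`. -/
def bb (k : ℕ) : ℕ := k * (k - 1) / 2

/-- `⟨1 ⊕ α⟩_m = ∏_{i=1}^m (1 + α q^{i-1})`. -/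
noncomputable def oplus (q α : ℝ) (m : ℕ) : ℝ := ∏ i ∈ Finset.Icc 1 m, (1 + α * q ^ (i - 1))

/-- `⟨1 ⊖ β⟩_m = ∏_{i=1}^m (1 - β q^{i-1})`. -/
noncomputable def ominus (q β : ℝ) (m : ℕ) : ℝ := ∏ i ∈ Finset.Icc 1 m, (1 - β * q ^ (i - 1))

/-- q-trinomial coefficient `T_q(n; x₁, x₂)`. -/
noncomputable def qTri (q : ℝ) (n x1 x2 : ℕ) : ℝ :=
  qFact q n / (qFact q x1 * qFact q x2 * qFact q (n - x1 - x2))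

/-! The factor `[y]_{m,q}` vanishes for `y < m` and absorbs `m` of the q-factorials:
`[y]_{m,q} C_q(N, y) = [N]_{m,q} C_q(N - m, y - m)`. Writing `y = m + j` and
`b(m + j) = b(m) + b(j) + m j`, the sum becomes
`[N]_{m,q} α^m q^{b(m)} ∑_j C_q(N - m, j) (α q^m)^j q^{b(j)}`, and by the q-binomial theorem
the last sum is `⟨1 ⊕ α q^m⟩_{N-m} = ⟨1 ⊕ α⟩_N / ⟨1 ⊕ α⟩_m`. -/

section

variable {q : ℝ}

theorem qInt_natCast_eq_geom_sum (hq : q ≠ 1) (k : ℕ) :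
    qInt q k = ∑ i ∈ range k, q ^ i := by
  rw [qInt, geom_sum_eq hq, zpow_natCast, ← neg_div_neg_eq, neg_sub, neg_sub]

theorem qInt_natCast_pos (hq0 : 0 < q) (hq1 : q ≠ 1) {k : ℕ} (hk : 0 < k) :
    0 < qInt q k := by
  rw [qInt_natCast_eq_geom_sum hq1]
  exact sum_pos (fun i _ => pow_pos hq0 i) (nonempty_range_iff.mpr hk.ne')

theorem qInt_natCast_add (hq : q ≠ 1) (a b : ℕ) :
    qInt q ((a + b : ℕ) : ℤ) = qInt q a + q ^ a * qInt q b := by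
  simp only [qInt_natCast_eq_geom_sum hq, sum_range_add, pow_add, mul_sum]

theorem qFact_zero : qFact q 0 = 1 := by simp [qFact]

theorem qFact_succ (n : ℕ) : qFact q (n + 1) = qFact q n * qInt q ((n + 1 : ℕ) : ℤ) := by
  rw [qFact, prod_Icc_succ_top (by omega)]
  rfl

theorem qFact_pos (hq0 : 0 < q) (hq1 : q ≠ 1) (n : ℕ) : 0 < qFact q n :=
  prod_pos fun _ hi => qInt_natCast_pos hq0 hq1 (mem_Icc.mp hi).1

theorem qBinom_zero_right (hq0 : 0 < q) (hq1 : q ≠ 1) (n : ℕ) : qBinom q n 0 = 1 := by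
  rw [qBinom, qFact_zero, one_mul, Nat.sub_zero, div_self (qFact_pos hq0 hq1 n).ne']

theorem qBinom_self (hq0 : 0 < q) (hq1 : q ≠ 1) (n : ℕ) : qBinom q n n = 1 := by
  rw [qBinom, Nat.sub_self, qFact_zero, mul_one, div_self (qFact_pos hq0 hq1 n).ne']

theorem qBinom_succ_succ (hq0 : 0 < q) (hq1 : q ≠ 1) {n k : ℕ} (hk : k < n) :
    qBinom q (n + 1) (k + 1) = qBinom q n (k + 1) + q ^ (n - k) * qBinom q n k := by
  obtain ⟨b, rfl⟩ := Nat.exists_eq_add_of_lt hk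
  have hsum : qInt q ((k + b + 1 + 1 : ℕ) : ℤ) =
      qInt q ((b + 1 : ℕ) : ℤ) + q ^ (b + 1) * qInt q ((k + 1 : ℕ) : ℤ) := by
    rw [← qInt_natCast_add hq1, show b + 1 + (k + 1) = k + b + 1 + 1 by ring]
  simp only [qBinom, show k + b + 1 + 1 - (k + 1) = b + 1 by omega,
    show k + b + 1 - (k + 1) = b by omega, show k + b + 1 - k = b + 1 by omega]
  rw [qFact_succ (k + b + 1), qFact_succ k, qFact_succ b, hsum]
  have hF : ∀ i, qFact q i ≠ 0 := fun i => (qFact_pos hq0 hq1 i).ne'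
  have hk1 := (qInt_natCast_pos hq0 hq1 k.succ_pos).ne'
  have hb1 := (qInt_natCast_pos hq0 hq1 b.succ_pos).ne'
  field_simp [hF]

theorem bb_add (m n : ℕ) : bb (m + n) = bb m + bb n + m * n := by
  simp only [bb, ← sum_range_id]
  rw [sum_range_add, sum_add_distrib, sum_const, card_range, smul_eq_mul]
  ring

theorem bb_succ (n : ℕ) : bb (n + 1) = bb n + n := by
  rw [bb_add, mul_one, show bb 1 = 0 from rfl, add_zero]

theorem oplus_zero (α : ℝ) : oplus q α 0 = 1 := by simp [oplus]

theorem oplus_succ (α : ℝ) (n : ℕ) : oplus q α (n + 1) = oplus q α n * (1 + α * q ^ n) := by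
  rw [oplus, prod_Icc_succ_top (by omega)]
  rfl

theorem oplus_add (α : ℝ) (m n : ℕ) :
    oplus q α (m + n) = oplus q α m * oplus q (α * q ^ m) n := by
  induction n with
  | zero => rw [add_zero, oplus_zero, mul_one]
  | succ n ih => rw [← add_assoc, oplus_succ, oplus_succ, ih, pow_add]; ring

theorem oplus_pos (hq : 0 ≤ q) {α : ℝ} (hα : 0 ≤ α) (n : ℕ) : 0 < oplus q α n :=
  prod_pos fun _ _ => by positivity

theorem oplus_eq_sum_qBinom (hq0 : 0 < q) (hq1 : q ≠ 1) (α : ℝ) (N : ℕ) :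
    oplus q α N = ∑ y ∈ range (N + 1), qBinom q N y * α ^ y * q ^ bb y := by
  induction N with
  | zero => simp [oplus_zero, qBinom_self hq0 hq1, bb]
  | succ N ih =>
    set t : ℕ → ℕ → ℝ := fun n y => qBinom q n y * α ^ y * q ^ bb y
    have hpascal : ∀ y ∈ range N, t (N + 1) (y + 1) = t N (y + 1) + α * q ^ N * t N y := by
      intro y hy
      have hyN := mem_range.mp hy
      simp only [t, qBinom_succ_succ hq0 hq1 hyN, bb_succ, pow_add, ← pow_sub_mul_pow q hyN.le]
      ring
    have htop : t (N + 1) (N + 1) = α * q ^ N * t N N := by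
      simp only [t, qBinom_self hq0 hq1, bb_succ, pow_add]
      ring
    have hbot : t (N + 1) 0 = t N 0 := by simp only [t, qBinom_zero_right hq0 hq1]
    calc oplus q α (N + 1) = (∑ y ∈ range (N + 1), t N y) * (1 + α * q ^ N) := by
          rw [oplus_succ, ih]
      _ = (∑ y ∈ range N, t N (y + 1) + t N 0) +
            α * q ^ N * (∑ y ∈ range N, t N y + t N N) := by
          rw [← sum_range_succ', ← sum_range_succ]; ring
      _ = ∑ y ∈ range (N + 1 + 1), t (N + 1) y := by
          rw [sum_range_succ', sum_range_succ, sum_congr rfl hpascal, htop, hbot, sum_add_distrib,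
            mul_add, mul_sum]
          ring

theorem qFall_eq_prod_range (u : ℤ) (m : ℕ) :
    qFall q u m = ∏ i ∈ range m, qInt q (u - i) := by
  rw [qFall, ← Finset.Ico_add_one_right_eq_Icc, prod_Ico_eq_prod_range, Nat.add_sub_cancel]
  refine prod_congr rfl fun i _ => ?_
  push_cast
  ring_nf

theorem qFall_succ (u : ℤ) (m : ℕ) : qFall q u (m + 1) = qInt q u * qFall q (u - 1) m := by
  simp only [qFall_eq_prod_range, prod_range_succ', Nat.cast_zero, sub_zero, Nat.cast_succ,
    sub_add_eq_sub_sub_swap, mul_comm]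

theorem qFall_natCast_of_lt {y m : ℕ} (h : y < m) : qFall q y m = 0 := by
  induction m generalizing y with
  | zero => omega
  | succ m ih =>
    rw [qFall_succ]
    rcases y with _ | y
    · simp [qInt]
    · rw [Nat.cast_succ, add_sub_cancel_right, ih (by omega), mul_zero]

theorem qFall_natCast_add_mul_qFact (m j : ℕ) :
    qFall q ((m + j : ℕ) : ℤ) m * qFact q j = qFact q (m + j) := by
  induction m with
  | zero => rw [qFall_eq_prod_range, prod_range_zero, one_mul, zero_add]
  | succ m ih =>
    rw [qFall_succ, show ((m + 1 + j : ℕ) : ℤ) - 1 = ((m + j : ℕ) : ℤ) by push_cast; ring,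
      mul_assoc, ih, show m + 1 + j = m + j + 1 by ring, qFact_succ, mul_comm]

theorem qFall_natCast_add_mul_qBinom (hq0 : 0 < q) (hq1 : q ≠ 1) {m j n : ℕ} (hj : j ≤ n) :
    qFall q ((m + j : ℕ) : ℤ) m * qBinom q (m + n) (m + j) =
      qFall q ((m + n : ℕ) : ℤ) m * qBinom q n j := by
  obtain ⟨r, rfl⟩ := Nat.exists_eq_add_of_le hj
  have hF : ∀ k, qFact q k ≠ 0 := fun k => (qFact_pos hq0 hq1 k).ne'
  rw [eq_div_of_mul_eq (hF j) (qFall_natCast_add_mul_qFact m j),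
    eq_div_of_mul_eq (hF (j + r)) (qFall_natCast_add_mul_qFact m (j + r)), qBinom, qBinom,
    show m + (j + r) - (m + j) = r by omega, Nat.add_sub_cancel_left, ← add_assoc]
  field_simp [hF]

theorem sum_qFall_mul_qBinom (hq0 : 0 < q) (hq1 : q ≠ 1) (α : ℝ) {m N : ℕ} (hm : m ≤ N) :
    ∑ y ∈ range (N + 1), qFall q (y : ℤ) m * qBinom q N y * α ^ y * q ^ bb y =
      qFall q (N : ℤ) m * α ^ m * q ^ bb m * oplus q (α * q ^ m) (N - m) := by
  obtain ⟨n, rfl⟩ := Nat.exists_eq_add_of_le hm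
  have hlow : ∑ y ∈ range m, qFall q (y : ℤ) m * qBinom q (m + n) y * α ^ y * q ^ bb y = 0 :=
    sum_eq_zero fun y hy => by rw [qFall_natCast_of_lt (mem_range.mp hy)]; ring
  rw [Nat.add_sub_cancel_left, oplus_eq_sum_qBinom hq0 hq1, mul_sum, add_assoc, sum_range_add,
    hlow, zero_add]
  refine sum_congr rfl fun j hj => ?_
  rw [qFall_natCast_add_mul_qBinom hq0 hq1 (Nat.lt_succ_iff.mp (mem_range.mp hj)), bb_add,
    pow_add, pow_add, pow_add, mul_pow, pow_mul]
  ring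

end

theorem stmt1_general (q : ℝ) (hq0 : 0 < q) (hq1 : q < 1) (N : ℕ) (α : ℝ)
    (hα : 0 < α) (m : ℕ) (hm : m ≤ N) :
    ∑ y ∈ Finset.range (N + 1),
      qFall q (y : ℤ) m * qBinom q N y * α ^ y * q ^ bb y / oplus q α N
      = qFall q (N : ℤ) m * α ^ m * q ^ bb m / oplus q α m := by
  have hsplit : oplus q α N = oplus q α m * oplus q (α * q ^ m) (N - m) := by
    rw [← oplus_add, Nat.add_sub_cancel' hm]
  have hhead := (oplus_pos hq0.le hα.le m).ne'
  have htail := (oplus_pos hq0.le (by positivity : 0 ≤ α * q ^ m) (N - m)).ne'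
  rw [← sum_div, sum_qFall_mul_qBinom hq0 hq1.ne α hm, hsplit]
  field_simp

theorem stmt1 (q : ℝ) (hq0 : 0 < q) (hq1 : q < 1) (N : ℕ) (α : ℝ)
    (hα : 0 < α) (hα' : α < 1) (m : ℕ) (hm : m ≤ N) :
    ∑ y ∈ Finset.range (N + 1),
      qFall q (y : ℤ) m * qBinom q N y * α ^ y * q ^ bb y / oplus q α N
      = qFall q (N : ℤ) m * α ^ m * q ^ bb m / oplus q α m :=
  stmt1_general q hq0 hq1 N α hα m hm
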